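/- arXiv:1911.03475 — 2 statements merged into one kernel-verified Lean document; each statement's English description precedes it below -/
import Mathlib

section
/- Let $t_0 < t_f$ be real numbers, let $a \in \mathbb{R}$, and define the affine control $u^*(t) = a\,(t - t_f)$ on $[t_0, t_f]$. Let $u : [t_0, t_f] \to \mathbb{R}$ be any continuous control, and let $v, p$ (resp. $v^*, p^*$) denote the speed and position trajectories generated by $u$ (resp. $u^*$) through the double-integrator dynamics from the same initial position $p(t_0) = p^*(t_0)$ and the same initial speed $v(t_0) = v^*(t_0)$. If the two trajectories also reach the same terminal position, $p(t_f) = p^*(t_f)$, then $\int_{t_0}^{t_f} \tfrac{1}{2} u^*(t)^2\, dt \le \int_{t_0}^{t_f} \tfrac{1}{2} u(t)^2\, dt$. That is, a control that is affine in time and vanishes at the terminal time minimizes the transient-energy cost among all controls steering the double integrator between the given boundary conditions with free terminal speed. -/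
/-!
Cauchy's formula for repeated integration turns the position of the double integrator at `tf`
into `p0 + v0 (tf - t0) + ∫ (tf - s) u(s) ds`, so equal terminal positions mean that `u` and `u*`
have the same moment against `tf - s`. Since `u*` is a multiple of `tf - s`, this makes `u*`
orthogonal to `w := u - u*` in `L²`, and `∫ u² = ∫ u*² + ∫ w² ≥ ∫ u*²`.
-/

open intervalIntegral Set

theorem integral_primitive_eq_integral_sub_mul {w : ℝ → ℝ} {a b : ℝ}
    (hw : ContinuousOn w (uIcc a b)) :
    ∫ t in a..b, ∫ s in a..t, w s = ∫ s in a..b, (b - s) * w s := by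
  have hW : ∀ x ∈ Ioo (min a b) (max a b), HasDerivAt (fun t => ∫ s in a..t, w s) (w x) x :=
    fun x hx => integral_hasDerivAt_right
      (hw.mono (uIcc_subset_uIcc_left (Ioo_subset_Icc_self hx))).intervalIntegrable
      (ContinuousOn.stronglyMeasurableAtFilter isOpen_Ioo (hw.mono Ioo_subset_Icc_self) x hx)
      (hw.continuousAt (Icc_mem_nhds hx.1 hx.2))
  have hparts := integral_mul_deriv_eq_deriv_mul_of_hasDerivAt (u := fun t => t - b)
    (by fun_prop) (continuousOn_primitive_interval hw.integrableOn_uIcc)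
    (fun x _ => (hasDerivAt_id' x).sub_const b) hW intervalIntegrable_const
    hw.intervalIntegrable
  simp only [sub_self, zero_mul, integral_same, mul_zero, one_mul, zero_sub] at hparts
  rw [← neg_neg (∫ t in a..b, ∫ s in a..t, w s), ← hparts, ← integral_neg]
  exact integral_congr fun s _ => by ring

theorem integral_of_eq_const_add_primitive {u v : ℝ → ℝ} {t₀ t₁ v₀ : ℝ}
    (hu : ContinuousOn u (uIcc t₀ t₁)) (hv : ∀ t ∈ uIcc t₀ t₁, v t = v₀ + ∫ s in t₀..t, u s) :
    ∫ t in t₀..t₁, v t = v₀ * (t₁ - t₀) + ∫ s in t₀..t₁, (t₁ - s) * u s := by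
  rw [integral_congr hv, integral_add intervalIntegrable_const
    (continuousOn_primitive_interval hu.integrableOn_uIcc).intervalIntegrable,
    integral_primitive_eq_integral_sub_mul hu, intervalIntegral.integral_const, smul_eq_mul,
    mul_comm]

theorem integral_half_sq_le_of_integral_mul_eq {f g : ℝ → ℝ} {a b : ℝ} (hab : a ≤ b)
    (hf : ContinuousOn f (uIcc a b)) (hg : ContinuousOn g (uIcc a b))
    (h : ∫ t in a..b, f t * g t = ∫ t in a..b, f t * f t) :
    ∫ t in a..b, (1 / 2) * f t ^ 2 ≤ ∫ t in a..b, (1 / 2) * g t ^ 2 := by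
  have hsq : ∫ t in a..b, f t * f t = 2 * ∫ t in a..b, (1 / 2) * f t ^ 2 := by
    rw [← intervalIntegral.integral_const_mul]; exact integral_congr fun t _ => by ring
  have hpt : ∫ t in a..b, (f t * g t - (1 / 2) * f t ^ 2) ≤ ∫ t in a..b, (1 / 2) * g t ^ 2 :=
    integral_mono_on hab ((hf.mul hg).sub (continuousOn_const.mul (hf.pow 2))).intervalIntegrable
      (continuousOn_const.mul (hg.pow 2)).intervalIntegrable
      fun t _ => by nlinarith [sq_nonneg (g t - f t)]
  rw [integral_sub (by exact (hf.mul hg).intervalIntegrable)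
    (by exact (continuousOn_const.mul (hf.pow 2)).intervalIntegrable), h, hsq] at hpt
  linarith

/-- Double-integrator energy optimality of the affine control `u*(t) = a*(t - tf)`
vanishing at the terminal time, with free terminal speed: among all continuous
controls `u` on `[t0, tf]` steering the double integrator from the same initial
position and speed to the same terminal position, `u*` minimizes the transient
energy cost `∫ (1/2) u(t)^2 dt`. -/
theorem affine_control_vanishing_at_tf_minimizes_energy
    (t0 tf a : ℝ) (ht : t0 < tf)
    (p0 v0 : ℝ)
    (u : ℝ → ℝ) (hu : ContinuousOn u (Set.Icc t0 tf))
    (v p vstar pstar : ℝ → ℝ)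
    (hv : ∀ t, v t = v0 + ∫ s in t0..t, u s)
    (hp : ∀ t, p t = p0 + ∫ s in t0..t, v s)
    (hvstar : ∀ t, vstar t = v0 + ∫ s in t0..t, a * (s - tf))
    (hpstar : ∀ t, pstar t = p0 + ∫ s in t0..t, vstar s)
    (hterm : p tf = pstar tf) :
    (∫ t in t0..tf, (1 / 2) * (a * (t - tf)) ^ 2) ≤ ∫ t in t0..tf, (1 / 2) * (u t) ^ 2 := by
  have hu' : ContinuousOn u (uIcc t0 tf) := by rwa [uIcc_of_le ht.le]
  have hstar : ContinuousOn (fun t => a * (t - tf)) (uIcc t0 tf) := by fun_prop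
  have hmoment : ∫ s in t0..tf, (tf - s) * u s = ∫ s in t0..tf, (tf - s) * (a * (s - tf)) := by
    rw [hp, hpstar, integral_of_eq_const_add_primitive hu' fun t _ => hv t,
      integral_of_eq_const_add_primitive hstar fun t _ => hvstar t] at hterm
    linarith
  have hcross : ∀ g : ℝ → ℝ,
      ∫ s in t0..tf, a * (s - tf) * g s = -a * ∫ s in t0..tf, (tf - s) * g s := fun g => by
    rw [← intervalIntegral.integral_const_mul]; exact integral_congr fun s _ => by ring
  refine integral_half_sq_le_of_integral_mul_eq ht.le hstar hu' ?_
  rw [hcross u, hcross fun s => a * (s - tf), hmoment]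
end

section
/- Let $t_0 < t_f$ be real numbers, let $a, b \in \mathbb{R}$, and define the affine control $u^*(t) = a\,t + b$ on $[t_0, t_f]$. Let $u : [t_0, t_f] \to \mathbb{R}$ be any continuous control, and let $v, p$ (resp. $v^*, p^*$) denote the speed and position trajectories generated by $u$ (resp. $u^*$) through the double-integrator dynamics from the same initial position $p(t_0) = p^*(t_0)$ and the same initial speed $v(t_0) = v^*(t_0)$. If the two trajectories also satisfy $p(t_f) = p^*(t_f)$ and $v(t_f) = v^*(t_f)$, then $\int_{t_0}^{t_f} \tfrac{1}{2} u^*(t)^2\, dt \le \int_{t_0}^{t_f} \tfrac{1}{2} u(t)^2\, dt$. That is, when the inequality state and control constraints are inactive, the optimal control for the energy-minimization problem with fixed terminal position and terminal speed is affine in time: $u^*(t) = a\,t + b$. -/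
/-!
Write `u = u* + w`. Equal terminal speeds say `∫ w = 0`, and then equal terminal positions say
`∫ W = 0` for the primitive `W t = ∫_{t₀}^t w`. Integrating by parts, `∫ t w(t) dt = -∫ W = 0`, so
`w` is orthogonal to every affine function, in particular to `u*`, and
`∫ u² = ∫ u*² + ∫ w² ≥ ∫ u*²`.
-/

open MeasureTheory intervalIntegral Set

theorem integral_hasDerivAt_right_of_continuousOn {w : ℝ → ℝ} {a b x : ℝ}
    (hw : ContinuousOn w (uIcc a b)) (hx : x ∈ Ioo (min a b) (max a b)) :
    HasDerivAt (fun t => ∫ s in a..t, w s) (w x) x :=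
  integral_hasDerivAt_right
    ((hw.mono (uIcc_subset_uIcc left_mem_uIcc (Ioo_subset_Icc_self hx))).intervalIntegrable)
    ((hw.mono Ioo_subset_Icc_self).stronglyMeasurableAtFilter isOpen_Ioo x hx)
    (hw.continuousAt (Icc_mem_nhds hx.1 hx.2))

theorem integral_id_mul_eq_zero {w : ℝ → ℝ} {a b : ℝ} (hw : ContinuousOn w (uIcc a b))
    (hw₀ : ∫ t in a..b, w t = 0) (hW₀ : ∫ t in a..b, ∫ s in a..t, w s = 0) :
    ∫ t in a..b, t * w t = 0 := by
  have hibp := integral_mul_deriv_eq_deriv_mul_of_hasDerivAt (u' := fun _ => (1 : ℝ))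
    continuousOn_id (continuousOn_primitive_interval (hw.integrableOn_compact isCompact_uIcc))
    (fun x _ => hasDerivAt_id x) (fun x hx => integral_hasDerivAt_right_of_continuousOn hw hx)
    intervalIntegrable_const hw.intervalIntegrable
  simpa [hw₀, hW₀] using hibp

theorem integral_affine_mul_eq_zero {w : ℝ → ℝ} {a b : ℝ} (hw : ContinuousOn w (uIcc a b))
    (hw₀ : ∫ t in a..b, w t = 0) (hW₀ : ∫ t in a..b, ∫ s in a..t, w s = 0) (α β : ℝ) :
    ∫ t in a..b, (α * t + β) * w t = 0 := by
  have hmoment : IntervalIntegrable (fun t => α * (t * w t)) volume a b :=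
    ((continuousOn_id.mul hw).const_smul α).intervalIntegrable
  calc ∫ t in a..b, (α * t + β) * w t = ∫ t in a..b, (α * (t * w t) + β * w t) := by
        congr 1; ext t; ring
    _ = α * (∫ t in a..b, t * w t) + β * ∫ t in a..b, w t := by
        rw [intervalIntegral.integral_add hmoment (hw.intervalIntegrable.const_mul β),
          intervalIntegral.integral_const_mul, intervalIntegral.integral_const_mul]
    _ = 0 := by rw [integral_id_mul_eq_zero hw hw₀ hW₀, hw₀]; ring

theorem integral_sq_le_integral_add_sq {f g : ℝ → ℝ} {a b : ℝ} (hab : a ≤ b)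
    (hf : ContinuousOn f (uIcc a b)) (hg : ContinuousOn g (uIcc a b))
    (horth : ∫ t in a..b, f t * g t = 0) :
    ∫ t in a..b, f t ^ 2 ≤ ∫ t in a..b, (f t + g t) ^ 2 := by
  have hexpand : ∫ t in a..b, (f t + g t) ^ 2
      = (∫ t in a..b, f t ^ 2) + 2 * (∫ t in a..b, f t * g t) + ∫ t in a..b, g t ^ 2 := by
    simp only [add_sq, mul_assoc]
    rw [intervalIntegral.integral_add, intervalIntegral.integral_add,
      intervalIntegral.integral_const_mul]
    all_goals exact ContinuousOn.intervalIntegrable (by fun_prop)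
  have hg_sq : 0 ≤ ∫ t in a..b, g t ^ 2 := integral_nonneg hab fun t _ => sq_nonneg (g t)
  rw [hexpand, horth]
  linarith

theorem intervalIntegrable_of_eq_add_primitive {f x : ℝ → ℝ} {x₀ a b : ℝ}
    (hf : IntervalIntegrable f volume a b) (hx : ∀ t, x t = x₀ + ∫ s in a..t, f s) :
    IntervalIntegrable x volume a b := by
  rw [funext hx]
  exact (continuousOn_const.add
    (continuousOn_primitive_interval' hf left_mem_uIcc)).intervalIntegrable

theorem eqOn_primitive_sub {f g x y : ℝ → ℝ} {x₀ a b : ℝ}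
    (hf : IntervalIntegrable f volume a b) (hg : IntervalIntegrable g volume a b)
    (hx : ∀ t, x t = x₀ + ∫ s in a..t, f s) (hy : ∀ t, y t = x₀ + ∫ s in a..t, g s) :
    EqOn (fun t => ∫ s in a..t, (f s - g s)) (fun t => x t - y t) (uIcc a b) := by
  intro t ht
  have hsub : uIcc a t ⊆ uIcc a b := uIcc_subset_uIcc left_mem_uIcc ht
  simp only [hx, hy, intervalIntegral.integral_sub (hf.mono_set hsub) (hg.mono_set hsub)]
  ring

/-- Double-integrator energy optimality of the affine control `u*(t) = a*t + b`:
among all continuous controls `u` on `[t0, tf]` steering the double integrator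
from the same initial position and speed to the same terminal position and
terminal speed, `u*` minimizes the transient energy cost `∫ (1/2) u(t)^2 dt`. -/
theorem affine_control_minimizes_energy
    (t0 tf a b : ℝ) (ht : t0 < tf)
    (p0 v0 : ℝ)
    (u : ℝ → ℝ) (hu : ContinuousOn u (Set.Icc t0 tf))
    (v p vstar pstar : ℝ → ℝ)
    (hv : ∀ t, v t = v0 + ∫ s in t0..t, u s)
    (hp : ∀ t, p t = p0 + ∫ s in t0..t, v s)
    (hvstar : ∀ t, vstar t = v0 + ∫ s in t0..t, (a * s + b))
    (hpstar : ∀ t, pstar t = p0 + ∫ s in t0..t, vstar s)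
    (htermp : p tf = pstar tf)
    (htermv : v tf = vstar tf) :
    (∫ t in t0..tf, (1 / 2) * (a * t + b) ^ 2) ≤ ∫ t in t0..tf, (1 / 2) * (u t) ^ 2 := by
  set c : ℝ → ℝ := fun t => a * t + b
  have hc : ContinuousOn c (uIcc t0 tf) := by fun_prop
  have hu' : ContinuousOn u (uIcc t0 tf) := by rwa [uIcc_of_le ht.le]
  have hΔv := eqOn_primitive_sub hu'.intervalIntegrable hc.intervalIntegrable hv hvstar
  have hΔp := eqOn_primitive_sub (intervalIntegrable_of_eq_add_primitive hu'.intervalIntegrable hv)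
    (intervalIntegrable_of_eq_add_primitive hc.intervalIntegrable hvstar) hp hpstar
  have hw₀ : ∫ t in t0..tf, (u t - c t) = 0 :=
    (hΔv right_mem_uIcc).trans (sub_eq_zero.2 htermv)
  have hW₀ : ∫ t in t0..tf, ∫ s in t0..t, (u s - c s) = 0 := by
    rw [integral_congr hΔv]
    exact (hΔp right_mem_uIcc).trans (sub_eq_zero.2 htermp)
  have hle := integral_sq_le_integral_add_sq ht.le hc (hu'.sub hc)
    (integral_affine_mul_eq_zero (hu'.sub hc) hw₀ hW₀ a b)
  simp only [Pi.sub_apply, add_sub_cancel] at hle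
  rw [intervalIntegral.integral_const_mul, intervalIntegral.integral_const_mul]
  linarith
end
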